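/- Let a, b, p > 0, let B be Beta(a,b) and E an independent standard exponential. Then |P(B > 1 − E/(pw)) − P(B > (1 + E/w)^{-1/p})| = o(w^{-b}) as w → ∞. -/

import Mathlib

open MeasureTheory Filter Real Asymptotics

/-- The Beta(a,b) distribution on ℝ, via its density. -/
noncomputable def betaM (a b : ℝ) : Measure ℝ :=
  volume.withDensity fun x => ENNReal.ofReal
    (if 0 < x ∧ x < 1 then
      x ^ (a - 1) * (1 - x) ^ (b - 1) * (Real.Gamma (a + b) / (Real.Gamma a * Real.Gamma b))
    else 0)

/-- The generalized gamma GG(c,p) distribution on ℝ, via its density. -/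
noncomputable def genGammaM (c p : ℝ) : Measure ℝ :=
  volume.withDensity fun x => ENNReal.ofReal
    (if 0 < x then p / Real.Gamma (c / p) * x ^ (c - 1) * Real.exp (-(x ^ p)) else 0)

/-- The Gamma(r,1) distribution on ℝ, via its density. -/
noncomputable def gammaM (r : ℝ) : Measure ℝ :=
  volume.withDensity fun x => ENNReal.ofReal
    (if 0 < x then x ^ (r - 1) * Real.exp (-x) / Real.Gamma r else 0)

/-- The standard exponential distribution on ℝ, via its density. -/
noncomputable def expM : Measure ℝ :=
  volume.withDensity fun x => ENNReal.ofReal (if 0 < x then Real.exp (-x) else 0)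

open Set
open scoped symmDiff

/-! With `q = 1/p` and `x = E/w`, the elementary bounds
`1 - q x ≤ (1 + x)^(-q) ≤ 1 - q x + q (q + 1) x²` show that the second event is contained in the
first up to a null set, and that their difference is `B ∈ (1 - q x, (1 + x)^(-q)]`: an interval
at distance `≈ q x` from `1` and of length `O(x²)`. Near `1` the Beta law gives such an interval
`(l, r]` mass `O((1 - l)^b - (1 - r)^b) = O(x^(b + min b 1))`. Integrating over `E` costs only a
moment of the exponential law, so the difference is `O(w^(-(b + min b 1))) = o(w^(-b))`. -/

lemma one_sub_mul_le_one_add_rpow_neg {q x : ℝ} (hq : 0 ≤ q) (hx : -1 < x) :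
    1 - q * x ≤ (1 + x) ^ (-q) := by
  have hx1 : 0 < 1 + x := by linarith
  have hlog : log (1 + x) ≤ x := by linarith [log_le_sub_one_of_pos hx1]
  rw [rpow_def_of_pos hx1]
  nlinarith [add_one_le_exp (log (1 + x) * -q)]

lemma one_add_rpow_neg_le {q x : ℝ} (hq : 0 ≤ q) (hx : 0 ≤ x) :
    (1 + x) ^ (-q) ≤ 1 - q * x + q * (q + 1) * x ^ 2 := by
  have hx1 : 0 < 1 + x := by linarith
  set t := q * x / (1 + x) with ht
  have ht0 : 0 ≤ t := by positivity
  have htx : t ≤ q * x := div_le_self (by positivity) (by linarith)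
  have htx' : q * x - q * x ^ 2 ≤ t := by
    rw [ht, le_div_iff₀ hx1]; nlinarith [mul_nonneg hq (pow_nonneg hx 3)]
  have hlog : x / (1 + x) ≤ log (1 + x) := by
    have h := one_sub_inv_le_log_of_pos hx1
    rwa [show 1 - (1 + x)⁻¹ = x / (1 + x) by field_simp; ring] at h
  calc (1 + x) ^ (-q) ≤ exp (-t) := by
        rw [rpow_def_of_pos hx1, ht, mul_div_assoc]
        exact exp_le_exp.2 (by nlinarith)
    _ ≤ (1 + t)⁻¹ := by
        rw [exp_neg]; exact inv_anti₀ (by positivity) (by linarith [add_one_le_exp t])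
    _ ≤ 1 - t + t ^ 2 := by
        rw [inv_le_iff_one_le_mul₀ (by positivity)]; nlinarith [pow_nonneg ht0 3]
    _ ≤ 1 - q * x + q * (q + 1) * x ^ 2 := by nlinarith [mul_le_mul ht0 htx ht0 (by positivity)]

lemma rpow_sub_rpow_le_rpow_sub {b u v : ℝ} (hb0 : 0 ≤ b) (hb1 : b ≤ 1) (hv : 0 ≤ v)
    (hvu : v ≤ u) : u ^ b - v ^ b ≤ (u - v) ^ b := by
  have h := rpow_add_le_add_rpow hv (sub_nonneg.2 hvu) hb0 hb1
  rw [add_sub_cancel] at h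
  linarith

lemma rpow_sub_rpow_le_mul_sub {b u v : ℝ} (hb : 1 ≤ b) (hv : 0 ≤ v) (hvu : v ≤ u) :
    u ^ b - v ^ b ≤ b * u ^ (b - 1) * (u - v) := by
  rcases (hv.trans hvu).eq_or_lt with rfl | hu
  · rw [le_antisymm hvu hv]; simp
  have hbern := one_add_mul_self_le_rpow_one_add (s := v / u - 1)
    (by linarith [div_nonneg hv hu.le]) hb
  rw [add_sub_cancel, div_rpow hv hu.le] at hbern
  have hub : u ^ b = u ^ (b - 1) * u := by rw [← rpow_add_one hu.ne', sub_add_cancel]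
  rw [le_div_iff₀ (rpow_pos_of_pos hu b)] at hbern
  have : (v / u - 1) * u ^ b = u ^ (b - 1) * (v - u) := by
    rw [hub]; field_simp
  nlinarith

lemma rpow_sub_rpow_le {b u v : ℝ} (hb : 0 < b) (hv : 0 ≤ v) (hvu : v ≤ u) :
    u ^ b - v ^ b ≤ max b 1 * u ^ (b - min b 1) * (u - v) ^ min b 1 := by
  rcases le_total b 1 with hb1 | hb1
  · simpa [hb1] using rpow_sub_rpow_le_rpow_sub hb.le hb1 hv hvu
  · simpa [hb1] using rpow_sub_rpow_le_mul_sub hb1 hv hvu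

lemma mul_rpow_sub_one_sub_one_add_rpow_neg_le {b q x : ℝ} (hb : 0 < b) (hq : 0 ≤ q)
    (hx : 0 ≤ x) :
    (q * x) ^ b - (1 - (1 + x) ^ (-q)) ^ b ≤
      max b 1 * q ^ (b - min b 1) * (q * (q + 1)) ^ min b 1 * x ^ (b + min b 1) := by
  set m := min b 1
  have hm : 0 ≤ m := le_min hb.le zero_le_one
  have hv : 0 ≤ 1 - (1 + x) ^ (-q) :=
    sub_nonneg.2 (rpow_le_one_of_one_le_of_nonpos (by linarith) (neg_nonpos.2 hq))
  have hvu : 1 - (1 + x) ^ (-q) ≤ q * x := by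
    linarith [one_sub_mul_le_one_add_rpow_neg hq (by linarith : -1 < x)]
  have hgap : q * x - (1 - (1 + x) ^ (-q)) ≤ q * (q + 1) * x ^ 2 := by
    linarith [one_add_rpow_neg_le hq hx]
  calc (q * x) ^ b - (1 - (1 + x) ^ (-q)) ^ b
      ≤ max b 1 * (q * x) ^ (b - m) * (q * x - (1 - (1 + x) ^ (-q))) ^ m :=
        rpow_sub_rpow_le hb hv hvu
    _ ≤ max b 1 * (q * x) ^ (b - m) * (q * (q + 1) * x ^ 2) ^ m := by
        gcongr
    _ = max b 1 * q ^ (b - m) * (q * (q + 1)) ^ m * x ^ (b + m) := by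
        rw [mul_rpow hq hx, mul_rpow (by positivity) (by positivity), ← rpow_natCast_mul hx,
          show b + m = (b - m) + (2 : ℕ) * m by push_cast; ring,
          rpow_add' hx (ne_of_gt (by push_cast; linarith))]
        ring

lemma betaM_eq_betaMeasure (a b : ℝ) : betaM a b = ProbabilityTheory.betaMeasure a b := by
  unfold betaM ProbabilityTheory.betaMeasure
  congr 1
  funext x
  rw [ProbabilityTheory.betaPDF_eq, ProbabilityTheory.beta, one_div_div]
  split_ifs <;> ring_nf

lemma isProbabilityMeasure_betaM {a b : ℝ} (ha : 0 < a) (hb : 0 < b) :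
    IsProbabilityMeasure (betaM a b) :=
  betaM_eq_betaMeasure a b ▸ ProbabilityTheory.isProbabilityMeasureBeta ha hb

lemma lintegral_rpow_expM {s : ℝ} (hs : -1 < s) :
    ∫⁻ z, ENNReal.ofReal (z ^ s) ∂expM = ENNReal.ofReal (Gamma (s + 1)) := by
  rw [expM, lintegral_withDensity_eq_lintegral_mul _
    (Measurable.ite measurableSet_Ioi (by fun_prop) (by fun_prop)).ennreal_ofReal (by fun_prop),
    Gamma_eq_integral (by linarith), ofReal_integral_eq_lintegral_ofReal
      (GammaIntegral_convergent (by linarith))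
      (ae_restrict_of_forall_mem measurableSet_Ioi fun z hz =>
        mul_nonneg (exp_pos _).le (rpow_nonneg (le_of_lt hz) _)),
    ← lintegral_indicator measurableSet_Ioi]
  congr 1
  funext z
  by_cases hz : 0 < z <;> simp [hz, ← ENNReal.ofReal_mul (exp_pos _).le]

instance : IsProbabilityMeasure expM :=
  ⟨by simpa using lintegral_rpow_expM (s := 0) (by norm_num)⟩

lemma expM_Iic_zero : expM (Iic 0) = 0 := by
  rw [expM, withDensity_apply _ measurableSet_Iic]
  exact setLIntegral_eq_zero measurableSet_Iic fun z (hz : z ≤ 0) => by simp [hz.not_gt]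

lemma rpow_le_max_one_rpow {c x y : ℝ} (hy : 0 < y) (hyx : y ≤ x) (hx : x ≤ 1) :
    x ^ c ≤ max 1 (y ^ c) := by
  rcases le_total 0 c with hc | hc
  · exact le_max_of_le_left (rpow_le_one (hy.trans_le hyx).le hx hc)
  · exact le_max_of_le_right (rpow_le_rpow_of_nonpos hy hyx hc)

lemma intervalIntegrable_one_sub_rpow {b : ℝ} (hb : 0 < b) (l r : ℝ) :
    IntervalIntegrable (fun x => (1 - x) ^ (b - 1)) volume l r := by
  simpa using (intervalIntegral.intervalIntegrable_rpow' (r := b - 1) (by linarith)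
    (a := 1 - l) (b := 1 - r)).comp_sub_left 1

lemma integral_one_sub_rpow {b : ℝ} (hb : 0 < b) (l r : ℝ) :
    ∫ x in l..r, (1 - x) ^ (b - 1) = ((1 - l) ^ b - (1 - r) ^ b) / b := by
  rw [intervalIntegral.integral_comp_sub_left (fun t => t ^ (b - 1)),
    integral_rpow (Or.inl (by linarith)), sub_add_cancel]

lemma betaM_Ioc_le {a b : ℝ} (ha : 0 < a) (hb : 0 < b) :
    ∃ K, 0 ≤ K ∧ ∀ l r, 2⁻¹ ≤ l → l ≤ r → r ≤ 1 →
      betaM a b (Ioc l r) ≤ ENNReal.ofReal (K * ((1 - l) ^ b - (1 - r) ^ b)) := by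
  set C := Gamma (a + b) / (Gamma a * Gamma b)
  set Ka := max 1 ((2⁻¹ : ℝ) ^ (a - 1))
  have hC : 0 < C := div_pos (Gamma_pos_of_pos (by linarith))
    (mul_pos (Gamma_pos_of_pos ha) (Gamma_pos_of_pos hb))
  have hKa : 0 < Ka := lt_max_of_lt_left one_pos
  refine ⟨C * Ka / b, by positivity, fun l r hl hlr hr => ?_⟩
  calc betaM a b (Ioc l r)
      ≤ ∫⁻ x in Ioc l r, ENNReal.ofReal (C * Ka * (1 - x) ^ (b - 1)) := by
        rw [betaM, withDensity_apply _ measurableSet_Ioc]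
        refine setLIntegral_mono (by fun_prop) fun x hx => ENNReal.ofReal_le_ofReal ?_
        have hx1 : 0 ≤ 1 - x := by linarith [hx.2]
        split_ifs with h
        · have := rpow_le_max_one_rpow (c := a - 1) (by norm_num) (hl.trans hx.1.le) h.2.le
          calc x ^ (a - 1) * (1 - x) ^ (b - 1) * C ≤ Ka * (1 - x) ^ (b - 1) * C := by gcongr
            _ = C * Ka * (1 - x) ^ (b - 1) := by ring
        · positivity
    _ = ENNReal.ofReal (C * Ka / b * ((1 - l) ^ b - (1 - r) ^ b)) := by
        rw [← ofReal_integral_eq_lintegral_ofReal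
          ((intervalIntegrable_one_sub_rpow hb l r).1.const_mul _)
          (ae_restrict_of_forall_mem measurableSet_Ioc fun x hx => by
            have : 0 ≤ 1 - x := by linarith [hx.2]
            positivity),
          integral_const_mul, ← intervalIntegral.integral_of_le hlr,
          integral_one_sub_rpow hb]
        ring_nf

lemma betaM_Ioc_one_sub_mul_le {a b q : ℝ} (ha : 0 < a) (hb : 0 < b) (hq : 0 < q) :
    ∃ C, 0 ≤ C ∧ ∀ x, 0 ≤ x →
      betaM a b (Ioc (1 - q * x) ((1 + x) ^ (-q))) ≤ ENNReal.ofReal (C * x ^ (b + min b 1)) := by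
  have := isProbabilityMeasure_betaM ha hb
  obtain ⟨K, hK, hbeta⟩ := betaM_Ioc_le ha hb
  set s := b + min b 1
  have hs : 0 < s := by positivity
  set c := max b 1 * q ^ (b - min b 1) * (q * (q + 1)) ^ min b 1
  refine ⟨max (K * c) ((2 * q) ^ s), by positivity, fun x hx => ?_⟩
  rcases le_or_gt (q * x) 2⁻¹ with hqx | hqx
  · calc betaM a b (Ioc (1 - q * x) ((1 + x) ^ (-q)))
        ≤ ENNReal.ofReal (K * ((q * x) ^ b - (1 - (1 + x) ^ (-q)) ^ b)) := by
          simpa using hbeta _ _ (by linarith)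
            (one_sub_mul_le_one_add_rpow_neg hq.le (by linarith))
            (rpow_le_one_of_one_le_of_nonpos (by linarith) (by linarith))
      _ ≤ ENNReal.ofReal (max (K * c) ((2 * q) ^ s) * x ^ s) := by
          refine ENNReal.ofReal_le_ofReal ?_
          calc K * ((q * x) ^ b - (1 - (1 + x) ^ (-q)) ^ b) ≤ K * (c * x ^ s) :=
                mul_le_mul_of_nonneg_left (mul_rpow_sub_one_sub_one_add_rpow_neg_le hb hq.le hx) hK
            _ ≤ max (K * c) ((2 * q) ^ s) * x ^ s := by
                rw [← mul_assoc]; gcongr; exact le_max_left _ _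
  -- away from `1` the Beta density is not controlled, but then `1 ≤ (2 q x)^s`
  · calc betaM a b (Ioc (1 - q * x) ((1 + x) ^ (-q))) ≤ 1 := prob_le_one
      _ ≤ ENNReal.ofReal (max (K * c) ((2 * q) ^ s) * x ^ s) := by
          rw [ENNReal.one_le_ofReal]
          calc (1 : ℝ) ≤ (2 * q * x) ^ s := one_le_rpow (by linarith) hs.le
            _ = (2 * q) ^ s * x ^ s := mul_rpow (by positivity) hx
            _ ≤ max (K * c) ((2 * q) ^ s) * x ^ s := by gcongr; exact le_max_right _ _

lemma preimage_prodMk_diff (p w z : ℝ) :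
    (fun y => (y, z)) ⁻¹' ({q : ℝ × ℝ | q.1 > 1 - q.2 / (p * w)} \
        {q : ℝ × ℝ | q.1 > (1 + q.2 / w) ^ (-(1 / p))}) =
      Ioc (1 - 1 / p * (z / w)) ((1 + z / w) ^ (-(1 / p))) := by
  ext y
  rw [div_mul_div_comm, one_mul]
  simp [and_comm]

lemma measure_prod_diff_le {a b p : ℝ} (ha : 0 < a) (hb : 0 < b) (hp : 0 < p) :
    ∃ C, 0 ≤ C ∧ ∀ w, 0 < w →
      ((betaM a b).prod expM) ({q : ℝ × ℝ | q.1 > 1 - q.2 / (p * w)} \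
        {q : ℝ × ℝ | q.1 > (1 + q.2 / w) ^ (-(1 / p))}) ≤
      ENNReal.ofReal (C * w ^ (-(b + min b 1))) := by
  have := isProbabilityMeasure_betaM ha hb
  obtain ⟨C, hC, hbeta⟩ := betaM_Ioc_one_sub_mul_le ha hb (one_div_pos.2 hp)
  set s := b + min b 1
  have hs : 0 < s := by positivity
  refine ⟨C * Gamma (s + 1), mul_nonneg hC (Gamma_pos_of_pos (by linarith)).le, fun w hw => ?_⟩
  have hpos : ∀ᵐ z ∂expM, 0 < z := by
    simpa using measure_eq_zero_iff_ae_notMem.1 expM_Iic_zero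
  calc _ = ∫⁻ z, betaM a b (Ioc (1 - 1 / p * (z / w)) ((1 + z / w) ^ (-(1 / p)))) ∂expM := by
        rw [Measure.prod_apply_symm (by measurability)]
        simp_rw [preimage_prodMk_diff]
    _ ≤ ∫⁻ z, ENNReal.ofReal (C * w ^ (-s)) * ENNReal.ofReal (z ^ s) ∂expM := by
        refine lintegral_mono_ae (hpos.mono fun z hz => (hbeta _ (by positivity)).trans_eq ?_)
        rw [← ENNReal.ofReal_mul' (rpow_nonneg hz.le s), div_rpow hz.le hw.le, rpow_neg hw.le]
        ring_nf
    _ = ENNReal.ofReal (C * Gamma (s + 1) * w ^ (-s)) := by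
        rw [lintegral_const_mul _ (by fun_prop), lintegral_rpow_expM (by linarith),
          ← ENNReal.ofReal_mul (by positivity)]
        ring_nf

lemma measure_prod_diff_eq_zero {a b p w : ℝ} (hp : 0 < p) (hw : 0 < w) :
    ((betaM a b).prod expM) ({q : ℝ × ℝ | q.1 > (1 + q.2 / w) ^ (-(1 / p))} \
      {q : ℝ × ℝ | q.1 > 1 - q.2 / (p * w)}) = 0 := by
  refine measure_mono_null (t := univ ×ˢ Iic 0) ?_ (by simp [Measure.prod_prod, expM_Iic_zero])
  rintro ⟨y, z⟩ ⟨hB, hA⟩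
  refine ⟨trivial, show z ≤ 0 from not_lt.1 fun hz => hA ?_⟩
  have := one_sub_mul_le_one_add_rpow_neg (x := z / w) (one_div_pos.2 hp).le
    (by linarith [div_pos hz hw])
  simp only [mem_ofPred_eq] at hB ⊢
  rw [div_mul_div_comm, one_mul] at this
  linarith

lemma isLittleO_rpow_rpow_atTop {r s : ℝ} (h : r < s) :
    (fun x : ℝ => x ^ r) =o[atTop] fun x => x ^ s := by
  rw [isLittleO_iff_tendsto' ((eventually_gt_atTop 0).mono fun x hx h0 =>
    absurd h0 (rpow_pos_of_pos hx s).ne')]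
  refine (tendsto_rpow_neg_atTop (sub_pos.2 h)).congr' ?_
  filter_upwards [eventually_gt_atTop 0] with x hx
  rw [← rpow_sub hx, neg_sub]

lemma abs_measure_prod_sub_le {a b p : ℝ} (ha : 0 < a) (hb : 0 < b) (hp : 0 < p) :
    ∃ C, ∀ w, 0 < w →
      |(((betaM a b).prod expM) {q : ℝ × ℝ | q.1 > 1 - q.2 / (p * w)}).toReal -
        (((betaM a b).prod expM) {q : ℝ × ℝ | q.1 > (1 + q.2 / w) ^ (-(1 / p))}).toReal| ≤
      C * w ^ (-(b + min b 1)) := by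
  have := isProbabilityMeasure_betaM ha hb
  obtain ⟨C, hC, hdiff⟩ := measure_prod_diff_le ha hb hp
  refine ⟨C, fun w hw => ?_⟩
  set μ := (betaM a b).prod expM
  set A := {q : ℝ × ℝ | q.1 > 1 - q.2 / (p * w)}
  set B := {q : ℝ × ℝ | q.1 > (1 + q.2 / w) ^ (-(1 / p))}
  calc |μ.real A - μ.real B| ≤ μ.real (A ∆ B) :=
        abs_measureReal_sub_le_measureReal_symmDiff (by measurability) (by measurability)
    _ ≤ μ.real (A \ B) + μ.real (B \ A) := measureReal_union_le _ _
    _ ≤ C * w ^ (-(b + min b 1)) := by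
        rw [measureReal_def μ (B \ A), measure_prod_diff_eq_zero hp hw, ENNReal.toReal_zero,
          add_zero]
        exact ENNReal.toReal_le_of_le_ofReal (by positivity) (hdiff w hw)

theorem beta_exp_prob_diff_littleO (a b p : ℝ) (ha : 0 < a) (hb : 0 < b) (hp : 0 < p) :
    (fun w : ℝ =>
        |(((betaM a b).prod expM) {q : ℝ × ℝ | q.1 > 1 - q.2 / (p * w)}).toReal -
          (((betaM a b).prod expM) {q : ℝ × ℝ | q.1 > (1 + q.2 / w) ^ (-(1 / p))}).toReal|)
      =o[atTop] fun w : ℝ => w ^ (-b) := by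
  obtain ⟨C, hC⟩ := abs_measure_prod_sub_le ha hb hp
  refine IsBigO.trans_isLittleO (IsBigO.of_bound C ?_)
    (isLittleO_rpow_rpow_atTop (by linarith [lt_min hb one_pos] : -(b + min b 1) < -b))
  filter_upwards [eventually_gt_atTop 0] with w hw
  rw [norm_of_nonneg (abs_nonneg _), norm_of_nonneg (rpow_pos_of_pos hw _).le]
  exact hC w hw
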